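/- arXiv:1608.05390 — 3 statements merged into one kernel-verified Lean document; each statement's English description precedes it below -/
import Mathlib

section
/- For every real α with 0 ≤ α < 1 and every p ∈ [0,1], min(T₊(p), T₋(p)) ≤ (α+4)/(α+2), with equality if and only if p = 2α/(α+2). Consequently, the maximum over p ∈ [0,1] of min(T₊(p), T₋(p)) equals (α+4)/(α+2) and is attained uniquely at p̄ = 2α/(α+2). -/
/-- For the circle-with-spike network with parameter `α ∈ [0,1)`, against the hider
distribution `ν_p` the clockwise search has expected time
`T₊(p) = p(1+α)/2 + (1−p)(2+α)` and the counterclockwise search has expected time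
`T₋(p) = p((2−α)+(1+α)/2) + (1−p)(2−α)`.  For every `p ∈ [0,1]`,
`min(T₊(p), T₋(p)) ≤ (α+4)/(α+2)`, with equality iff `p = 2α/(α+2)`; hence the
maximum over `p ∈ [0,1]` of the minimum equals `(α+4)/(α+2)` and is attained
uniquely at `p̄ = 2α/(α+2)`. -/
theorem circle_with_spike_hider_family (α : ℝ) (hα0 : 0 ≤ α) (hα1 : α < 1) :
    (∀ p ∈ Set.Icc (0 : ℝ) 1,
      min (p * ((1 + α) / 2) + (1 - p) * (2 + α))
          (p * ((2 - α) + (1 + α) / 2) + (1 - p) * (2 - α)) ≤ (α + 4) / (α + 2) ∧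
      (min (p * ((1 + α) / 2) + (1 - p) * (2 + α))
          (p * ((2 - α) + (1 + α) / 2) + (1 - p) * (2 - α)) = (α + 4) / (α + 2) ↔
        p = 2 * α / (α + 2))) ∧
    IsMaxOn
      (fun p : ℝ => min (p * ((1 + α) / 2) + (1 - p) * (2 + α))
        (p * ((2 - α) + (1 + α) / 2) + (1 - p) * (2 - α)))
      (Set.Icc (0 : ℝ) 1) (2 * α / (α + 2)) ∧
    (fun p : ℝ => min (p * ((1 + α) / 2) + (1 - p) * (2 + α))
        (p * ((2 - α) + (1 + α) / 2) + (1 - p) * (2 - α))) (2 * α / (α + 2))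
      = (α + 4) / (α + 2) := by
  have h2 : (0:ℝ) < α + 2 := by linarith
  have h2' : (α + 2 : ℝ) ≠ 0 := ne_of_gt h2
  have e1 : (2*α/(α+2)) * ((1+α)/2) + (1 - 2*α/(α+2)) * (2+α) = (α+4)/(α+2) := by
    field_simp; ring
  have e2 : (2*α/(α+2)) * ((2-α)+(1+α)/2) + (1 - 2*α/(α+2)) * (2-α) = (α+4)/(α+2) := by
    field_simp; ring
  have hfp : min ((2*α/(α+2)) * ((1+α)/2) + (1 - 2*α/(α+2)) * (2+α))
      ((2*α/(α+2)) * ((2-α)+(1+α)/2) + (1 - 2*α/(α+2)) * (2-α)) = (α+4)/(α+2) := by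
    rw [e1, e2, min_self]
  -- strict bounds in the two half-cases
  have hltm : ∀ p : ℝ, p * (α+2) < 2*α →
      p * ((2 - α) + (1 + α) / 2) + (1 - p) * (2 - α) < (α + 4) / (α + 2) := by
    intro p h
    rw [lt_div_iff₀ h2]
    nlinarith [mul_le_mul_of_nonneg_left h.le (by linarith : (0:ℝ) ≤ (1+α)/2)]
  have hltp : ∀ p : ℝ, 2*α < p * (α+2) →
      p * ((1 + α) / 2) + (1 - p) * (2 + α) < (α + 4) / (α + 2) := by
    intro p h
    rw [lt_div_iff₀ h2]
    nlinarith [mul_le_mul_of_nonneg_left h.le (by linarith : (0:ℝ) ≤ (3+α)/2)]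
  have hlem : ∀ p : ℝ, p * (α+2) ≤ 2*α →
      p * ((2 - α) + (1 + α) / 2) + (1 - p) * (2 - α) ≤ (α + 4) / (α + 2) := by
    intro p h
    rw [le_div_iff₀ h2]
    nlinarith [mul_le_mul_of_nonneg_left h (by linarith : (0:ℝ) ≤ (1+α)/2)]
  have hlep : ∀ p : ℝ, 2*α ≤ p * (α+2) →
      p * ((1 + α) / 2) + (1 - p) * (2 + α) ≤ (α + 4) / (α + 2) := by
    intro p h
    rw [le_div_iff₀ h2]
    nlinarith [mul_le_mul_of_nonneg_left h (by linarith : (0:ℝ) ≤ (3+α)/2)]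
  have key : ∀ p : ℝ,
      min (p * ((1 + α) / 2) + (1 - p) * (2 + α))
          (p * ((2 - α) + (1 + α) / 2) + (1 - p) * (2 - α)) ≤ (α + 4) / (α + 2) := by
    intro p
    rcases le_total (p * (α+2)) (2*α) with h | h
    · exact le_trans (min_le_right _ _) (hlem p h)
    · exact le_trans (min_le_left _ _) (hlep p h)
  have keyiff : ∀ p : ℝ,
      (min (p * ((1 + α) / 2) + (1 - p) * (2 + α))
          (p * ((2 - α) + (1 + α) / 2) + (1 - p) * (2 - α)) = (α + 4) / (α + 2) ↔
        p = 2 * α / (α + 2)) := by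
    intro p
    constructor
    · intro h
      rcases lt_trichotomy (p * (α+2)) (2*α) with hc | hc | hc
      · exact absurd h (ne_of_lt (lt_of_le_of_lt (min_le_right _ _) (hltm p hc)))
      · field_simp
        linarith
      · exact absurd h (ne_of_lt (lt_of_le_of_lt (min_le_left _ _) (hltp p hc)))
    · intro h; rw [h]; exact hfp
  refine ⟨fun p _ => ⟨key p, keyiff p⟩, ?_, hfp⟩
  intro p _
  simpa [hfp] using key p
end

section
/- For all real numbers μ > 0 and π with 0 ≤ π ≤ μ, one has (μ + π)/2 ≤ ((1 + √2)/2) · (μ² + π²)/(2μ). -/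
/-- For `0 ≤ π ≤ μ`, `(μ + π)/2 ≤ ((1 + √2)/2)·(μ² + π²)/(2μ)`: the block-optimal
strategy is `(1+√2)/2`-factor optimal. -/
theorem block_optimal_factor_bound (μ π : ℝ) (hμ : 0 < μ) (hπ0 : 0 ≤ π)
    (hπμ : π ≤ μ) :
    (μ + π) / 2 ≤ ((1 + Real.sqrt 2) / 2) * ((μ ^ 2 + π ^ 2) / (2 * μ)) := by
  have h2 : Real.sqrt 2 ^ 2 = 2 := Real.sq_sqrt (by norm_num)
  have h1 : (1:ℝ) ≤ Real.sqrt 2 := by nlinarith [Real.sqrt_nonneg 2]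
  rw [mul_div_assoc', le_div_iff₀ (by positivity)]
  nlinarith [mul_nonneg (sub_nonneg.2 h1) (sq_nonneg (μ - (1 + Real.sqrt 2) * π))]
end

section
/- For all real numbers x and r with 0 ≤ x ≤ r ≤ 1, min(f(x), g(r)) ≤ F(r), where F(r) = f(r) = (1+r)/(1+r²) if 0 ≤ r ≤ √2 − 1; F(r) = (1+√2)/2 if √2 − 1 ≤ r ≤ √((3−√2)/(1+√2)); and F(r) = g(r) = 2/(1+r²) if √((3−√2)/(1+√2)) ≤ r ≤ 1. -/
/-- Combining the block-optimal bound `f(x) = (1+x)/(1+x²)` (at `x = π/μ ≤ r`) and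
the bridge-optimal bound `g(r) = 2/(1+r²)`: for `0 ≤ x ≤ r ≤ 1`,
`min(f(x), g(r)) ≤ F(r)`, where `F(r) = f(r)` for `r ≤ √2 − 1`,
`F(r) = (1+√2)/2` for `√2 − 1 ≤ r ≤ √((3−√2)/(1+√2))`, and `F(r) = g(r)` for
`r ≥ √((3−√2)/(1+√2))`. -/
theorem combined_piecewise_bound (x r : ℝ) (hx : 0 ≤ x) (hxr : x ≤ r) (hr : r ≤ 1) :
    min ((1 + x) / (1 + x ^ 2)) (2 / (1 + r ^ 2)) ≤
      if r ≤ Real.sqrt 2 - 1 then (1 + r) / (1 + r ^ 2)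
      else if r ≤ Real.sqrt ((3 - Real.sqrt 2) / (1 + Real.sqrt 2)) then
        (1 + Real.sqrt 2) / 2
      else 2 / (1 + r ^ 2) := by
  have hs2 : (Real.sqrt 2) ^ 2 = 2 := Real.sq_sqrt (by norm_num)
  have hs1 : (1:ℝ) ≤ Real.sqrt 2 := by nlinarith [Real.sqrt_nonneg 2]
  have hxd : (0:ℝ) < 1 + x ^ 2 := by positivity
  have hrd : (0:ℝ) < 1 + r ^ 2 := by positivity
  split_ifs with h1 h2
  · refine le_trans (min_le_left _ _) ?_
    rw [div_le_div_iff₀ hxd hrd]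
    have key : x + r + x * r ≤ 1 := by nlinarith
    nlinarith [mul_nonneg (sub_nonneg.2 hxr) (sub_nonneg.2 key)]
  · refine le_trans (min_le_left _ _) ?_
    rw [div_le_div_iff₀ hxd (by norm_num : (0:ℝ) < 2)]
    nlinarith [sq_nonneg ((1 + Real.sqrt 2) * x - 1)]
  · exact min_le_right _ _
end
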